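/- arXiv:2212.01961 — 2 statements merged into one kernel-verified Lean document; each statement's English description precedes it below -/
import Mathlib

section
/- Let V, Q be real Hilbert spaces, a : V × V → ℝ a continuous coercive symmetric bilinear form with coercivity constant α, and b : V × Q → ℝ a continuous bilinear form satisfying the inf-sup condition with constant β > 0. Define A((u,p),(v,q)) := a(u,v) + b(v,p) + b(u,q). Then A satisfies the inf-sup stability: there exist constants γ > 0 and C > 0 such that for every (v,q) ∈ V × Q there exists (w,s) ∈ V × Q with γ(‖v‖_V + ‖q‖_Q) ≤ A((v,q),(w,s)) and ‖w‖_V + ‖s‖_Q ≤ C. -/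
set_option maxHeartbeats 1000000 in
/-- Inf-sup stability of the saddle-point bilinear form
`A((u,p),(v,q)) = a(u,v) + b(v,p) + b(u,q)` derived from the
Babuška–Brezzi conditions. -/
theorem stmt4
    {V Q : Type*} [NormedAddCommGroup V] [InnerProductSpace ℝ V] [CompleteSpace V]
    [NormedAddCommGroup Q] [InnerProductSpace ℝ Q] [CompleteSpace Q]
    (a : V →ₗ[ℝ] V →ₗ[ℝ] ℝ) (b : V →ₗ[ℝ] Q →ₗ[ℝ] ℝ)
    (Ca : ℝ) (hCa : ∀ u v : V, |a u v| ≤ Ca * ‖u‖ * ‖v‖)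
    (α : ℝ) (hα : 0 < α) (hcoer : ∀ v : V, α * ‖v‖ ^ 2 ≤ a v v)
    (hasym : ∀ u v : V, a u v = a v u)
    (Cb : ℝ) (hCb : ∀ (v : V) (q : Q), |b v q| ≤ Cb * ‖v‖ * ‖q‖)
    (β : ℝ) (hβ : 0 < β)
    (hinfsup : ∀ q : Q, q ≠ 0 → β * ‖q‖ ≤ ⨆ v : {v : V // v ≠ 0}, b v.1 q / ‖v.1‖) :
    ∃ γ : ℝ, 0 < γ ∧ ∃ C : ℝ, 0 < C ∧
      ∀ (v : V) (q : Q), ∃ (w : V) (s : Q),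
        γ * (‖v‖ + ‖q‖) ≤ a v w + b w q + b v s ∧ ‖w‖ + ‖s‖ ≤ C := by
  set D : ℝ := max Ca 1 with hD
  have hD1 : (1:ℝ) ≤ D := le_max_right _ _
  have hD0 : (0:ℝ) < D := lt_of_lt_of_le one_pos hD1
  have hCa' : ∀ u v : V, |a u v| ≤ D * ‖u‖ * ‖v‖ := fun u v =>
    (hCa u v).trans (by gcongr; exact le_max_left Ca 1)
  set δ : ℝ := α * β / (2 * D ^ 2) with hδdef
  have hδ0 : (0:ℝ) < δ := by positivity
  have hδeq : δ * (2 * D ^ 2) = α * β := div_mul_cancel₀ _ (by positivity)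
  set c : ℝ := min (α / 2) (δ * β / 4) with hc
  have hc1 : c ≤ α / 2 := min_le_left _ _
  have hc2 : c ≤ δ * β / 4 := min_le_right _ _
  have hc0 : (0:ℝ) < c := lt_min (by positivity) (by positivity)
  refine ⟨c / 2, by positivity, 2 + δ, by positivity, ?_⟩
  intro v q
  have key : ∃ w s, c * (‖v‖ ^ 2 + ‖q‖ ^ 2) ≤ a v w + b w q + b v s ∧
      ‖w‖ ≤ (1 + δ) * (‖v‖ + ‖q‖) ∧ ‖s‖ ≤ ‖v‖ + ‖q‖ := by
    by_cases hq : q = 0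
    · refine ⟨v, 0, ?_, ?_, ?_⟩
      · subst hq
        simp only [norm_zero, map_zero]
        have := hcoer v
        nlinarith [sq_nonneg ‖v‖]
      · subst hq; simp only [norm_zero]
        nlinarith [norm_nonneg v]
      · simp only [norm_zero]; positivity
    · have hq' : (0:ℝ) < ‖q‖ := norm_pos_iff.mpr hq
      have hsup := hinfsup q hq
      have hne : Nonempty {v : V // v ≠ 0} := by
        by_contra h
        rw [not_nonempty_iff] at h
        rw [Real.iSup_of_isEmpty] at hsup
        nlinarith
      have hlt : β / 2 * ‖q‖ < ⨆ v : {v : V // v ≠ 0}, b v.1 q / ‖v.1‖ :=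
        lt_of_lt_of_le (by nlinarith) hsup
      obtain ⟨⟨v₀, hv₀⟩, hlt⟩ := exists_lt_of_lt_ciSup hlt
      have hv₀' : (0:ℝ) < ‖v₀‖ := norm_pos_iff.mpr hv₀
      have hbv₀ : β / 2 * ‖q‖ * ‖v₀‖ < b v₀ q := by
        rwa [lt_div_iff₀ hv₀'] at hlt
      set z : V := (‖q‖ / ‖v₀‖) • v₀ with hz
      have hznorm : ‖z‖ = ‖q‖ := by
        rw [hz, norm_smul, Real.norm_eq_abs, abs_of_nonneg (by positivity),
          div_mul_cancel₀ _ (ne_of_gt hv₀')]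
      have hbz : β / 2 * ‖q‖ ^ 2 ≤ b z q := by
        have : b z q = ‖q‖ / ‖v₀‖ * b v₀ q := by
          rw [hz, map_smul]; rfl
        rw [this]
        have h1 : ‖q‖ / ‖v₀‖ * (β / 2 * ‖q‖ * ‖v₀‖) ≤ ‖q‖ / ‖v₀‖ * b v₀ q :=
          mul_le_mul_of_nonneg_left hbv₀.le (by positivity)
        calc β / 2 * ‖q‖ ^ 2 = ‖q‖ / ‖v₀‖ * (β / 2 * ‖q‖ * ‖v₀‖) := by
              field_simp
          _ ≤ _ := h1
      refine ⟨v + δ • z, -q, ?_, ?_, ?_⟩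
      · have hA : a v (v + δ • z) + b (v + δ • z) q + b v (-q)
            = a v v + δ * a v z + δ * b z q := by
          simp only [map_add, map_smul, map_neg, LinearMap.add_apply,
            LinearMap.smul_apply, LinearMap.neg_apply, smul_eq_mul]
          ring
        rw [hA]
        have h1 := hcoer v
        have h2 : -(D * ‖v‖ * ‖z‖) ≤ a v z := neg_le_of_abs_le (hCa' v z)
        rw [hznorm] at h2
        have hkey : δ ^ 2 * D ^ 2 * ‖q‖ ^ 2 = α * β * δ / 2 * ‖q‖ ^ 2 := by
          rw [hδdef]; field_simp
        have young : δ * D * (‖v‖ * ‖q‖) ≤ α / 2 * ‖v‖ ^ 2 + δ * β / 4 * ‖q‖ ^ 2 := by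
          nlinarith [sq_nonneg (α * ‖v‖ - δ * D * ‖q‖), hkey, hα]
        nlinarith [mul_le_mul_of_nonneg_left h2 hδ0.le,
          mul_le_mul_of_nonneg_left hbz hδ0.le,
          mul_le_mul_of_nonneg_right hc1 (sq_nonneg ‖v‖),
          mul_le_mul_of_nonneg_right hc2 (sq_nonneg ‖q‖), young]
      · calc ‖v + δ • z‖ ≤ ‖v‖ + ‖δ • z‖ := norm_add_le _ _
          _ = ‖v‖ + δ * ‖q‖ := by
              rw [norm_smul, Real.norm_eq_abs, abs_of_nonneg hδ0.le, hznorm]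
          _ ≤ (1 + δ) * (‖v‖ + ‖q‖) := by nlinarith [norm_nonneg v]
      · rw [norm_neg]; nlinarith [norm_nonneg v]
  obtain ⟨w, s, hA, hw, hs⟩ := key
  by_cases hN : ‖v‖ + ‖q‖ = 0
  · have hv : v = 0 := norm_eq_zero.mp (by nlinarith [norm_nonneg v, norm_nonneg q])
    have hq : q = 0 := norm_eq_zero.mp (by nlinarith [norm_nonneg v, norm_nonneg q])
    refine ⟨0, 0, ?_, ?_⟩
    · simp [hv, hq]
    · simp; positivity
  · have hN0 : (0:ℝ) < ‖v‖ + ‖q‖ := lt_of_le_of_ne (by positivity) (Ne.symm hN)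
    refine ⟨(‖v‖ + ‖q‖)⁻¹ • w, (‖v‖ + ‖q‖)⁻¹ • s, ?_, ?_⟩
    · have heq : a v ((‖v‖ + ‖q‖)⁻¹ • w) + b ((‖v‖ + ‖q‖)⁻¹ • w) q
          + b v ((‖v‖ + ‖q‖)⁻¹ • s)
          = (‖v‖ + ‖q‖)⁻¹ * (a v w + b w q + b v s) := by
        simp only [map_smul, LinearMap.smul_apply, smul_eq_mul]
        ring
      rw [heq, le_inv_mul_iff₀ hN0]
      nlinarith [sq_nonneg (‖v‖ - ‖q‖)]
    · rw [norm_smul, norm_smul, Real.norm_eq_abs, abs_of_nonneg (inv_nonneg.mpr hN0.le)]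
      have hinv : (‖v‖ + ‖q‖)⁻¹ * (‖v‖ + ‖q‖) = 1 := inv_mul_cancel₀ hN
      have hws : ‖w‖ + ‖s‖ ≤ (2 + δ) * (‖v‖ + ‖q‖) := by nlinarith
      nlinarith [mul_le_mul_of_nonneg_left hws (inv_nonneg.mpr hN0.le)]
end

section
/- Let V be a real inner product space with inner product a(·,·), W ⊆ V a finite-dimensional subspace, and Π : V → W the a-orthogonal projection onto W. Suppose S : V × V → ℝ is a symmetric bilinear form such that c₀ a(v,v) ≤ S(v,v) ≤ c₁ a(v,v) for all v ∈ ker Π, with constants 0 < c₀ ≤ c₁. Define a_h(u,v) := a(Πu, Πv) + S(u − Πu, v − Πv). Then a_h is consistent, i.e. a_h(p, v) = a(p, v) for all p ∈ W and v ∈ V, and stable, i.e. min(1, c₀) a(v,v) ≤ a_h(v,v) ≤ max(1, c₁) a(v,v) for all v ∈ V. -/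
open RealInnerProductSpace

/-! On `V = W ⊕ Wᗮ` the form `a_h` is the orthogonal sum of `a` on `W` and `S` on `Wᗮ`, while
`a(v,v) = a(Πv,Πv) + a(v - Πv, v - Πv)` by Pythagoras. Consistency holds because `p - Πp = 0`
for `p ∈ W` and `Π` is self-adjoint; stability follows by comparing the two splittings term by
term, with factor `1` on `W` and factor in `[c₀, c₁]` on `Wᗮ`. -/

namespace Submodule

variable {V : Type*} [NormedAddCommGroup V] [InnerProductSpace ℝ V]
  (W : Submodule ℝ V) [W.HasOrthogonalProjection]

/-- The discrete form `a_h` of the paper, with `Π = W.starProjection`. -/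
noncomputable def vemForm (S : V →ₗ[ℝ] V →ₗ[ℝ] ℝ) (u v : V) : ℝ :=
  ⟪W.starProjection u, W.starProjection v⟫ + S (u - W.starProjection u) (v - W.starProjection v)

theorem real_inner_self_eq_starProjection_add (v : V) :
    ⟪v, v⟫ = ⟪W.starProjection v, W.starProjection v⟫ +
      ⟪v - W.starProjection v, v - W.starProjection v⟫ := by
  have horth : ⟪W.starProjection v, v - W.starProjection v⟫ = 0 :=
    W.sub_starProjection_mem_orthogonal v _ (W.starProjection_apply_mem v)
  conv_lhs => rw [← add_sub_cancel (W.starProjection v) v]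
  rw [inner_add_add_self, horth, real_inner_comm _ (v - W.starProjection v), horth, add_zero,
    add_zero]

variable (S : V →ₗ[ℝ] V →ₗ[ℝ] ℝ)

theorem vemForm_of_mem_left {p : V} (hp : p ∈ W) (v : V) : W.vemForm S p v = ⟪p, v⟫ := by
  have hPp : W.starProjection p = p := W.starProjection_eq_self_iff.mpr hp
  rw [vemForm, hPp, sub_self, map_zero, LinearMap.zero_apply, add_zero,
    ← W.inner_starProjection_left_eq_right, hPp]

theorem min_mul_real_inner_self_le_vemForm {c₀ : ℝ} (hS : ∀ w ∈ Wᗮ, c₀ * ⟪w, w⟫ ≤ S w w)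
    (v : V) : min 1 c₀ * ⟪v, v⟫ ≤ W.vemForm S v v := by
  set w := v - W.starProjection v
  calc min 1 c₀ * ⟪v, v⟫
      = min 1 c₀ * ⟪W.starProjection v, W.starProjection v⟫ + min 1 c₀ * ⟪w, w⟫ := by
        rw [W.real_inner_self_eq_starProjection_add v, mul_add]
    _ ≤ 1 * ⟪W.starProjection v, W.starProjection v⟫ + c₀ * ⟪w, w⟫ :=
        add_le_add (mul_le_mul_of_nonneg_right (min_le_left _ _) real_inner_self_nonneg)
          (mul_le_mul_of_nonneg_right (min_le_right _ _) real_inner_self_nonneg)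
    _ ≤ W.vemForm S v v := by
        rw [one_mul]
        exact add_le_add_right (hS w (W.sub_starProjection_mem_orthogonal v)) _

theorem vemForm_le_max_mul_real_inner_self {c₁ : ℝ} (hS : ∀ w ∈ Wᗮ, S w w ≤ c₁ * ⟪w, w⟫)
    (v : V) : W.vemForm S v v ≤ max 1 c₁ * ⟪v, v⟫ := by
  set w := v - W.starProjection v
  calc W.vemForm S v v
      ≤ 1 * ⟪W.starProjection v, W.starProjection v⟫ + c₁ * ⟪w, w⟫ := by
        rw [one_mul]
        exact add_le_add_right (hS w (W.sub_starProjection_mem_orthogonal v)) _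
    _ ≤ max 1 c₁ * ⟪W.starProjection v, W.starProjection v⟫ + max 1 c₁ * ⟪w, w⟫ :=
        add_le_add (mul_le_mul_of_nonneg_right (le_max_left _ _) real_inner_self_nonneg)
          (mul_le_mul_of_nonneg_right (le_max_right _ _) real_inner_self_nonneg)
    _ = max 1 c₁ * ⟪v, v⟫ := by
        rw [W.real_inner_self_eq_starProjection_add v, mul_add]

end Submodule

theorem stmt5_general
    {V : Type*} [NormedAddCommGroup V] [InnerProductSpace ℝ V]
    (W : Submodule ℝ V) [Submodule.HasOrthogonalProjection W]
    (S : V →ₗ[ℝ] V →ₗ[ℝ] ℝ)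
    (c₀ c₁ : ℝ)
    (hS : ∀ v : V, (Submodule.orthogonalProjectionOnto W v : V) = 0 →
        c₀ * ⟪v, v⟫ ≤ S v v ∧ S v v ≤ c₁ * ⟪v, v⟫) :
    (∀ p ∈ W, ∀ v : V,
        ⟪(Submodule.orthogonalProjectionOnto W p : V), (Submodule.orthogonalProjectionOnto W v : V)⟫ +
          S (p - Submodule.orthogonalProjectionOnto W p) (v - Submodule.orthogonalProjectionOnto W v) = ⟪p, v⟫) ∧
    (∀ v : V,
        min 1 c₀ * ⟪v, v⟫ ≤
          ⟪(Submodule.orthogonalProjectionOnto W v : V), (Submodule.orthogonalProjectionOnto W v : V)⟫ +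
            S (v - Submodule.orthogonalProjectionOnto W v) (v - Submodule.orthogonalProjectionOnto W v) ∧
        ⟪(Submodule.orthogonalProjectionOnto W v : V), (Submodule.orthogonalProjectionOnto W v : V)⟫ +
            S (v - Submodule.orthogonalProjectionOnto W v) (v - Submodule.orthogonalProjectionOnto W v) ≤
          max 1 c₁ * ⟪v, v⟫) := by
  have hS_orth : ∀ w ∈ Wᗮ, c₀ * ⟪w, w⟫ ≤ S w w ∧ S w w ≤ c₁ * ⟪w, w⟫ := fun w hw =>
    hS w (by rw [W.orthogonalProjectionOnto_apply_of_mem_orthogonal hw, ZeroMemClass.coe_zero])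
  exact ⟨fun p hp v => W.vemForm_of_mem_left S hp v, fun v =>
    ⟨W.min_mul_real_inner_self_le_vemForm S (fun w hw => (hS_orth w hw).1) v,
      W.vemForm_le_max_mul_real_inner_self S (fun w hw => (hS_orth w hw).2) v⟩⟩

/-- Consistency and stability of the VEM discrete bilinear form
`a_h(u,v) = a(Πu, Πv) + S(u - Πu, v - Πv)` built from the `a`-orthogonal
projection `Π` onto a finite-dimensional subspace `W` and a stabilizing
symmetric bilinear form `S` spectrally equivalent to `a` on `ker Π`. -/
theorem stmt5
    {V : Type*} [NormedAddCommGroup V] [InnerProductSpace ℝ V]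
    (W : Submodule ℝ V) [FiniteDimensional ℝ W] [Submodule.HasOrthogonalProjection W]
    (S : V →ₗ[ℝ] V →ₗ[ℝ] ℝ) (hSsym : ∀ u v : V, S u v = S v u)
    (c₀ c₁ : ℝ) (hc₀ : 0 < c₀) (hc₀c₁ : c₀ ≤ c₁)
    (hS : ∀ v : V, (Submodule.orthogonalProjectionOnto W v : V) = 0 →
        c₀ * ⟪v, v⟫ ≤ S v v ∧ S v v ≤ c₁ * ⟪v, v⟫) :
    (∀ p ∈ W, ∀ v : V,
        ⟪(Submodule.orthogonalProjectionOnto W p : V), (Submodule.orthogonalProjectionOnto W v : V)⟫ +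
          S (p - Submodule.orthogonalProjectionOnto W p) (v - Submodule.orthogonalProjectionOnto W v) = ⟪p, v⟫) ∧
    (∀ v : V,
        min 1 c₀ * ⟪v, v⟫ ≤
          ⟪(Submodule.orthogonalProjectionOnto W v : V), (Submodule.orthogonalProjectionOnto W v : V)⟫ +
            S (v - Submodule.orthogonalProjectionOnto W v) (v - Submodule.orthogonalProjectionOnto W v) ∧
        ⟪(Submodule.orthogonalProjectionOnto W v : V), (Submodule.orthogonalProjectionOnto W v : V)⟫ +
            S (v - Submodule.orthogonalProjectionOnto W v) (v - Submodule.orthogonalProjectionOnto W v) ≤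
          max 1 c₁ * ⟪v, v⟫) :=
  stmt5_general W S c₀ c₁ hS
end
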